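/- Let τ and τ' be two triangles in ℝ² sharing a common edge e = {a, b}, and let x be the third vertex of τ'. If x lies inside the open circumscribed disc B(τ) of τ and the angle of τ' at x is acute or right (≤ π/2), then the circumradius of τ' is at most the circumradius of τ. -/
import Mathlib

open EuclideanGeometry

open RealInnerProductSpace

set_option maxHeartbeats 1000000 in
/-- Let `τ = {a, c, b}` be a triangle in the plane with circumcentre `o` and
circumradius `R`, and let `τ' = {a, x, b}` share the edge `{a, b}` with `τ`.
If `x` lies inside the open circumscribed disc of `τ` and the angle of `τ'` at
`x` is acute or right (`≤ π/2`), then the circumradius `R'` of `τ'` is at most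
`R`. -/
theorem circumradius_le_of_mem_ball
    (a b cc x o o' : EuclideanSpace ℝ (Fin 2)) (R R' : ℝ)
    (hab : a ≠ b)
    (hR : 0 < R) (hR' : 0 < R')
    (ho : dist a o = R ∧ dist cc o = R ∧ dist b o = R)
    (ho' : dist a o' = R' ∧ dist x o' = R' ∧ dist b o' = R')
    (hx : x ∈ Metric.ball o R)
    (hangle : ∠ a x b ≤ Real.pi / 2) :
    R' ≤ R := by
  obtain ⟨hao, -, hbo⟩ := ho
  obtain ⟨hao', hxo', hbo'⟩ := ho'
  rw [Metric.mem_ball] at hx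
  set m : EuclideanSpace ℝ (Fin 2) := midpoint ℝ a b with hm
  set A : EuclideanSpace ℝ (Fin 2) := a - m with hA
  set O : EuclideanSpace ℝ (Fin 2) := o - m with hO
  set O' : EuclideanSpace ℝ (Fin 2) := o' - m with hO'
  set X : EuclideanSpace ℝ (Fin 2) := x - m with hX
  have hm2 : m = (2:ℝ)⁻¹ • (a + b) := by rw [hm, midpoint_eq_smul_add, invOf_eq_inv]
  have hbm : b - m = -A := by
    rw [hA, hm2]; module
  -- inner product nonneg from the angle condition
  have hinner : 0 ≤ ⟪a - x, b - x⟫ := by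
    have h1 : ∠ a x b = InnerProductGeometry.angle (a - x) (b - x) := rfl
    have hc : 0 ≤ Real.cos (InnerProductGeometry.angle (a - x) (b - x)) := by
      apply Real.cos_nonneg_of_mem_Icc
      constructor
      · linarith [InnerProductGeometry.angle_nonneg (a - x) (b - x), Real.pi_pos]
      · rw [← h1]; exact hangle
    rw [← InnerProductGeometry.cos_angle_mul_norm_mul_norm]
    positivity
  have hangv : ⟪a - x, b - x⟫ = ‖X‖ ^ 2 - ‖A‖ ^ 2 := by
    have e1 : a - x = A - X := by rw [hA, hX]; abel
    have e2 : b - x = -A - X := by rw [← hbm, hX]; abel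
    rw [e1, e2]
    simp only [inner_sub_left, inner_sub_right, inner_neg_left, inner_neg_right,
      real_inner_self_eq_norm_sq, real_inner_comm A X]
    ring
  -- expand distance conditions
  have dist_sq : ∀ (u v : EuclideanSpace ℝ (Fin 2)),
      dist u v ^ 2 = ‖u - m‖ ^ 2 - 2 * ⟪u - m, v - m⟫ + ‖v - m‖ ^ 2 := by
    intro u v
    rw [dist_eq_norm]
    have : u - v = (u - m) - (v - m) := by abel
    rw [this, norm_sub_sq_real]
  have h1 : ‖A‖ ^ 2 - 2 * ⟪A, O⟫ + ‖O‖ ^ 2 = R ^ 2 := by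
    rw [← dist_sq a o, hao]
  have h2 : ‖A‖ ^ 2 + 2 * ⟪A, O⟫ + ‖O‖ ^ 2 = R ^ 2 := by
    have := dist_sq b o
    rw [hbo, hbm] at this
    simp only [inner_neg_left, norm_neg] at this
    linarith
  have hAO : ⟪A, O⟫ = 0 := by linarith
  have hRm : ‖A‖ ^ 2 + ‖O‖ ^ 2 = R ^ 2 := by linarith
  have h1' : ‖A‖ ^ 2 - 2 * ⟪A, O'⟫ + ‖O'‖ ^ 2 = R' ^ 2 := by
    rw [← dist_sq a o', hao']
  have h2' : ‖A‖ ^ 2 + 2 * ⟪A, O'⟫ + ‖O'‖ ^ 2 = R' ^ 2 := by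
    have := dist_sq b o'
    rw [hbo', hbm] at this
    simp only [inner_neg_left, norm_neg] at this
    linarith
  have hAO' : ⟪A, O'⟫ = 0 := by linarith
  have hRm' : ‖A‖ ^ 2 + ‖O'‖ ^ 2 = R' ^ 2 := by linarith
  have h5 : ‖X‖ ^ 2 - 2 * ⟪X, O'⟫ + ‖O'‖ ^ 2 = R' ^ 2 := by
    rw [← dist_sq x o', hxo']
  have h6 : ‖X‖ ^ 2 - 2 * ⟪X, O⟫ + ‖O‖ ^ 2 < R ^ 2 := by
    have h := dist_sq x o
    have hd2 : dist x o ^ 2 < R ^ 2 := by nlinarith [dist_nonneg (x := x) (y := o)]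
    linarith
  -- key scalar inequalities
  rw [hangv] at hinner
  have ht' : 0 ≤ ⟪X, O'⟫ := by linarith
  have hst : ⟪X, O'⟫ < ⟪X, O⟫ := by linarith
  have hs : 0 < ⟪X, O⟫ := lt_of_le_of_lt ht' hst
  have hOne : O ≠ 0 := by
    intro h0
    rw [h0, inner_zero_right] at hs
    exact lt_irrefl _ hs
  have hAne : A ≠ 0 := by
    rw [hA, hm2]
    intro h
    apply hab
    have : a - ((2 : ℝ)⁻¹) • (a + b) = ((2 : ℝ)⁻¹) • (a - b) := by module
    rw [this] at h
    have := smul_eq_zero.mp h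
    rcases this with h' | h'
    · norm_num at h'
    · exact sub_eq_zero.mp h'
  -- O and O' are parallel (both orthogonal to A in dimension 2)
  have hOmem : O ∈ (ℝ ∙ A)ᗮ :=
    Submodule.mem_orthogonal_singleton_iff_inner_left.mpr (real_inner_comm A O ▸ hAO)
  have hO'mem : O' ∈ (ℝ ∙ A)ᗮ :=
    Submodule.mem_orthogonal_singleton_iff_inner_left.mpr (real_inner_comm A O' ▸ hAO')
  have hfr : Module.finrank ℝ ((ℝ ∙ A)ᗮ : Submodule ℝ (EuclideanSpace ℝ (Fin 2))) = 1 := by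
    have h := Submodule.finrank_add_finrank_orthogonal (K := (ℝ ∙ A))
    rw [finrank_span_singleton hAne, finrank_euclideanSpace_fin] at h
    omega
  have hspan : (ℝ ∙ O) = (ℝ ∙ A)ᗮ := by
    apply Submodule.eq_of_le_of_finrank_eq
    · rw [Submodule.span_singleton_le_iff_mem]; exact hOmem
    · rw [hfr, finrank_span_singleton hOne]
  have : O' ∈ (ℝ ∙ O) := hspan ▸ hO'mem
  obtain ⟨c, hc⟩ := Submodule.mem_span_singleton.mp this
  have hXc : ⟪X, O'⟫ = c * ⟪X, O⟫ := by
    rw [← hc, real_inner_smul_right]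
  have hc01 : 0 ≤ c ∧ c < 1 := by
    rw [hXc] at ht' hst
    constructor
    · by_contra h
      push_neg at h
      linarith [mul_neg_of_neg_of_pos h hs]
    · by_contra h
      push_neg at h
      linarith [le_mul_of_one_le_left hs.le h]
  have hnO' : ‖O'‖ ^ 2 = c ^ 2 * ‖O‖ ^ 2 := by
    rw [← hc, norm_smul, Real.norm_eq_abs, mul_pow, sq_abs]
  have hc2 : c ^ 2 ≤ 1 := by nlinarith [hc01.1, hc01.2]
  have hsq : R' ^ 2 ≤ R ^ 2 := by nlinarith [sq_nonneg (‖O‖ : ℝ), hc2, hRm, hRm', hnO']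
  nlinarith
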